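/- Let Q be an NQPR in dimension d ≥ 2, and let N_C(Q) = max_{j,k} (1/2)·[λ_max(Q_j)·(‖Q_k‖₁ − 1) − λ_min(Q_j)·(‖Q_k‖₁ + 1)]. Then N_C(Q) ≥ (d² − 2 − (d−2)√(d+1))/d, and equality holds if and only if there exists a SIC Π_1, …, Π_{d²} such that Q_j = √(d+1)·Π_j + ((1 − √(d+1))/d)·I for every j. -/

import Mathlib

/-!
The spectrum `λ` of each `Q j` satisfies `∑ λ = 1` and `∑ λ² = d`. Let `M`, `m` be its largest
and smallest entries. Weighting `∑ (M - λᵢ)(λᵢ - m) ≥ 0` and Cauchy–Schwarz on the other `d - 2`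
entries suitably bounds `M + m` by `a + b`, where `a = (1 + (d-1)√(d+1))/d`, `b = (1 - √(d+1))/d`.
Since `λ² ≤ ½((M - m)|λ| + (M + m)λ)` entrywise, the `(j, j)` term is at least
`d - (M + m) ≥ d - (a + b)`, which is the bound. At equality both inequalities are tight and
every eigenvalue is `a` or `b`, i.e. `(Q j - a)(Q j - b) = 0`; then `(Q j - b)/√(d+1)` is a
projector, and the trace conditions on `Q` become those of a SIC. Conversely, a spectrum in
`{a, b}` summing to `1` has `λ_max = a`, `λ_min = b` and `‖·‖₁ = a - (d-1)b`, which makes every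
`(j, k)` term equal to the bound.
-/

open Finset Matrix

lemma eq_or_eq_of_add_eq_of_mul_eq {a b M m t : ℝ} (hsum : M + m = a + b)
    (hprod : M * m = a * b) (ht : t = M ∨ t = m) : t = a ∨ t = b := by
  have : (t - a) * (t - b) = 0 := by
    rcases ht with rfl | rfl <;> linear_combination t * hsum - hprod
  rcases mul_eq_zero.1 this with h | h
  · exact .inl (sub_eq_zero.1 h)
  · exact .inr (sub_eq_zero.1 h)

lemma abs_mul_sub_eq_of_eq_or_eq {a b t : ℝ} (hb : b ≤ 0) (ha : 0 ≤ a) (ht : t = a ∨ t = b) :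
    |t| * (a - b) = (a + b) * t - 2 * (a * b) := by
  rcases ht with rfl | rfl
  · rw [abs_of_nonneg ha]; ring
  · rw [abs_of_nonpos hb]; ring

lemma isIdempotentElem_inv_smul_iff {K A : Type*} [Field K] [Ring A] [Algebra K A] {X : A}
    {s : K} (hs : s ≠ 0) : IsIdempotentElem (s⁻¹ • X) ↔ (X - s • 1) * X = 0 := by
  have : (s⁻¹ * s⁻¹) • (s • X) = s⁻¹ • X := by
    rw [smul_smul]
    congr 1
    field_simp
  rw [IsIdempotentElem, smul_mul_smul_comm, ← this, smul_right_inj (by simpa using hs), sub_mul,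
    smul_mul_assoc, one_mul, sub_eq_zero]

namespace Matrix.IsHermitian

variable {𝕜 ι : Type*} [RCLike 𝕜] [Fintype ι] [DecidableEq ι] {A : Matrix ι ι 𝕜}

lemma trace_cfc (hA : A.IsHermitian) (f : ℝ → ℝ) :
    (cfc f A).trace = ∑ i, (f (hA.eigenvalues i) : 𝕜) := by
  rw [hA.cfc_eq, IsHermitian.cfc, Unitary.conjStarAlgAut_apply, trace_mul_cycle,
    Unitary.coe_star_mul_self, one_mul, trace_diagonal]
  rfl

lemma sum_eigenvalues_eq_re_trace (hA : A.IsHermitian) :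
    ∑ i, hA.eigenvalues i = RCLike.re A.trace := by
  simp [hA.trace_eq_sum_eigenvalues]

lemma sum_sq_eigenvalues_eq_re_trace_mul_self (hA : A.IsHermitian) :
    ∑ i, hA.eigenvalues i ^ 2 = RCLike.re (A * A).trace := by
  rw [← sq, ← cfc_pow_id (R := ℝ) A 2 hA.isSelfAdjoint, hA.trace_cfc]
  simp

lemma sub_smul_one_eq_cfc (hA : A.IsHermitian) (α : ℝ) :
    A - (α : 𝕜) • 1 = cfc (fun x : ℝ => x - α) A := by
  rw [cfc_sub .., cfc_id' .., cfc_const .., Algebra.algebraMap_eq_smul_one,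
    RCLike.real_smul_eq_coe_smul (K := 𝕜)]

lemma sub_smul_one_mul_sub_smul_one_eq_zero_iff (hA : A.IsHermitian) (α β : ℝ) :
    (A - (α : 𝕜) • 1) * (A - (β : 𝕜) • 1) = 0 ↔
      ∀ i, hA.eigenvalues i = α ∨ hA.eigenvalues i = β := by
  rw [hA.sub_smul_one_eq_cfc, hA.sub_smul_one_eq_cfc, ← cfc_mul .., ← cfc_zero ℝ A,
    cfc_eq_cfc_iff_eqOn, hA.spectrum_real_eq_range_eigenvalues]
  simp [Set.EqOn, sub_eq_zero]

end Matrix.IsHermitian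

noncomputable section

namespace NQPR

/-- `sicTop n` and `sicBottom n` are the eigenvalues of `√(n+1) Π + ((1 - √(n+1))/n) I` for a
rank-one projector `Π`. -/
def sicTop (n : ℕ) : ℝ := (1 + ((n : ℝ) - 1) * Real.sqrt (n + 1)) / n

def sicBottom (n : ℕ) : ℝ := (1 - Real.sqrt (n + 1)) / n

def negativityBound (n : ℕ) : ℝ := ((n : ℝ) ^ 2 - 2 - ((n : ℝ) - 2) * Real.sqrt (n + 1)) / n

/-- The `(j, k)` term of the channel negativity, evaluated at the spectra `μ` of `Q j` and `ν` of
`Q k`. -/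
def negativityTerm {n : ℕ} (μ ν : Fin n → ℝ) : ℝ :=
  1 / 2 * ((⨆ i, μ i) * ((∑ i, |ν i|) - 1) - (⨅ i, μ i) * ((∑ i, |ν i|) + 1))

section Constants

variable {n : ℕ}

lemma sq_sqrt_succ : Real.sqrt ((n : ℝ) + 1) ^ 2 = n + 1 := Real.sq_sqrt (by positivity)

lemma one_lt_sqrt_succ (hn : 1 ≤ n) : 1 < Real.sqrt ((n : ℝ) + 1) := by
  rw [Real.lt_sqrt zero_le_one]
  have : (1 : ℝ) ≤ n := by exact_mod_cast hn
  linarith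

lemma ofReal_sqrt_succ_ne_zero : ((Real.sqrt (n + 1) : ℝ) : ℂ) ≠ 0 := by
  exact_mod_cast (Real.sqrt_pos.2 (by positivity : (0 : ℝ) < n + 1)).ne'

lemma sicTop_sub_sicBottom (hn : 1 ≤ n) : sicTop n - sicBottom n = Real.sqrt (n + 1) := by
  have : (n : ℝ) ≠ 0 := by positivity
  rw [sicTop, sicBottom]
  field_simp
  ring

lemma mul_sicBottom (hn : 1 ≤ n) : n * sicBottom n = 1 - Real.sqrt (n + 1) := by
  have : (n : ℝ) ≠ 0 := by positivity
  rw [sicBottom]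
  field_simp

lemma sicBottom_neg (hn : 1 ≤ n) : sicBottom n < 0 :=
  div_neg_of_neg_of_pos (by linarith [one_lt_sqrt_succ hn]) (by positivity)

lemma sicTop_pos (hn : 1 ≤ n) : 0 < sicTop n := by
  have : (1 : ℝ) ≤ n := by exact_mod_cast hn
  exact div_pos (by nlinarith [Real.sqrt_nonneg ((n : ℝ) + 1)]) (by positivity)

lemma mul_sicTop_add_sicBottom (hn : 1 ≤ n) :
    n * (sicTop n + sicBottom n) = 2 + (n - 2) * Real.sqrt (n + 1) := by
  have : (n : ℝ) ≠ 0 := by positivity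
  rw [sicTop, sicBottom]
  field_simp
  ring

lemma mul_sicTop_mul_sicBottom (hn : 1 ≤ n) :
    n * (sicTop n * sicBottom n) = sicTop n + sicBottom n - n := by
  have : (n : ℝ) ≠ 0 := by positivity
  rw [sicTop, sicBottom]
  field_simp
  linear_combination (-(n : ℝ) + 1) * sq_sqrt_succ (n := n)

lemma negativityBound_eq (hn : 1 ≤ n) : negativityBound n = n - (sicTop n + sicBottom n) := by
  have : (n : ℝ) ≠ 0 := by positivity
  rw [negativityBound, div_eq_iff this]
  linear_combination mul_sicTop_add_sicBottom hn

/-- Weighting Cauchy–Schwarz by `n` and `∑ (M - λ)(λ - m) ≥ 0` by `2(n - 2)` bounds `M + m`. -/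
lemma sq_sub_two_identity (x M m : ℝ) :
    (x - 1) * ((x - 2) ^ 2 * (x + 1) - (x * (M + m) - 2) ^ 2) =
      x * (x * ((x - 2) * (x - M ^ 2 - m ^ 2) - (1 - M - m) ^ 2) +
        2 * (x - 2) * (M + m - x - x * (M * m))) := by
  ring

lemma add_le_sicTop_add_sicBottom (hn : 2 ≤ n) {M m : ℝ}
    (hprod : n * (M * m) ≤ M + m - n)
    (hcs : (1 - M - m) ^ 2 ≤ (n - 2) * (n - M ^ 2 - m ^ 2)) :
    M + m ≤ sicTop n + sicBottom n := by
  have hn' : (2 : ℝ) ≤ n := by exact_mod_cast hn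
  have hsq : (n * (M + m) - 2) ^ 2 ≤ ((n - 2) * Real.sqrt (n + 1)) ^ 2 := by
    have := sq_sub_two_identity n M m
    rw [mul_pow, sq_sqrt_succ]
    nlinarith [mul_nonneg (by linarith : (0 : ℝ) ≤ n - 2) (sub_nonneg.2 hprod),
      mul_nonneg (by linarith : (0 : ℝ) ≤ n) (sub_nonneg.2 hcs)]
  have := le_of_sq_le_sq hsq (mul_nonneg (by linarith) (Real.sqrt_nonneg _))
  nlinarith [mul_sicTop_add_sicBottom (by omega : 1 ≤ n)]

lemma mul_eq_sicTop_mul_sicBottom (hn : 3 ≤ n) {M m : ℝ}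
    (hprod : n * (M * m) ≤ M + m - n)
    (hcs : (1 - M - m) ^ 2 ≤ (n - 2) * (n - M ^ 2 - m ^ 2))
    (hsum : M + m = sicTop n + sicBottom n) :
    M * m = sicTop n * sicBottom n := by
  have hn' : (3 : ℝ) ≤ n := by exact_mod_cast hn
  have hσ : n * (M + m) - 2 = (n - 2) * Real.sqrt (n + 1) := by
    rw [hsum, mul_sicTop_add_sicBottom (by omega)]
    ring
  have := sq_sub_two_identity n M m
  rw [hσ, mul_pow, sq_sqrt_succ] at this
  have hprod' : n * (M * m) = M + m - n := by
    nlinarith [mul_nonneg (by linarith : (0 : ℝ) ≤ n) (sub_nonneg.2 hcs)]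
  have := mul_sicTop_mul_sicBottom (by omega : 1 ≤ n)
  have hn0 : (n : ℝ) ≠ 0 := by positivity
  apply mul_left_cancel₀ hn0
  linarith

end Constants

section Spectrum

variable {n : ℕ} {lam : Fin n → ℝ}

lemma sum_sub_mul_sub (h1 : ∑ i, lam i = 1) (h2 : ∑ i, lam i ^ 2 = n) (M m : ℝ) :
    ∑ i, (M - lam i) * (lam i - m) = M + m - n - n * (M * m) := by
  simp only [show ∀ i, (M - lam i) * (lam i - m) = (M + m) * lam i - lam i ^ 2 - M * m from
    fun i => by ring]
  rw [sum_sub_distrib, sum_sub_distrib, ← mul_sum, h1, h2, sum_const, card_univ,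
    Fintype.card_fin, nsmul_eq_mul]
  ring

lemma iSup_sub_mul_sub_iInf_nonneg (i : Fin n) :
    0 ≤ ((⨆ j, lam j) - lam i) * (lam i - ⨅ j, lam j) :=
  mul_nonneg (sub_nonneg.2 (le_ciSup (Finite.bddAbove_range lam) i))
    (sub_nonneg.2 (ciInf_le (Finite.bddBelow_range lam) i))

lemma mul_iSup_mul_iInf_le (h1 : ∑ i, lam i = 1) (h2 : ∑ i, lam i ^ 2 = n) :
    n * ((⨆ i, lam i) * ⨅ i, lam i) ≤ (⨆ i, lam i) + (⨅ i, lam i) - n := by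
  have := sum_nonneg fun i (_ : i ∈ univ) => iSup_sub_mul_sub_iInf_nonneg (lam := lam) i
  rw [sum_sub_mul_sub h1 h2] at this
  linarith

lemma sub_le_negativityTerm_self (h1 : ∑ i, lam i = 1) (h2 : ∑ i, lam i ^ 2 = n) :
    n - ((⨆ i, lam i) + ⨅ i, lam i) ≤ negativityTerm lam lam := by
  set M := ⨆ i, lam i
  set m := ⨅ i, lam i
  have hpt : ∀ i ∈ univ, lam i ^ 2 ≤ ((M - m) * |lam i| + (M + m) * lam i) / 2 := by
    intro i _
    have hM : lam i ≤ M := le_ciSup (Finite.bddAbove_range lam) i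
    have hm : m ≤ lam i := ciInf_le (Finite.bddBelow_range lam) i
    rcases le_or_gt 0 (lam i) with h | h
    · rw [abs_of_nonneg h]; nlinarith
    · rw [abs_of_neg h]; nlinarith
  have := sum_le_sum hpt
  rw [h2, ← sum_div, sum_add_distrib, ← mul_sum, ← mul_sum, h1] at this
  rw [negativityTerm]
  linarith

lemma iInf_lt_iSup (hn : 2 ≤ n) (h1 : ∑ i, lam i = 1) (h2 : ∑ i, lam i ^ 2 = n) :
    (⨅ i, lam i) < ⨆ i, lam i := by
  have : Nonempty (Fin n) := ⟨⟨0, by omega⟩⟩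
  by_contra! hle
  have hconst : ∀ i, lam i = ⨆ j, lam j := fun i =>
    le_antisymm (le_ciSup (Finite.bddAbove_range lam) i)
      (hle.trans (ciInf_le (Finite.bddBelow_range lam) i))
  generalize (⨆ j, lam j) = M at hconst
  simp only [hconst, sum_const, card_univ, Fintype.card_fin, nsmul_eq_mul] at h1 h2
  have hn' : (2 : ℝ) ≤ n := by exact_mod_cast hn
  nlinarith

lemma sq_one_sub_iSup_sub_iInf_le (hn : 2 ≤ n) (h1 : ∑ i, lam i = 1)
    (h2 : ∑ i, lam i ^ 2 = n) :
    (1 - (⨆ i, lam i) - ⨅ i, lam i) ^ 2 ≤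
      (n - 2) * (n - (⨆ i, lam i) ^ 2 - (⨅ i, lam i) ^ 2) := by
  have : Nonempty (Fin n) := ⟨⟨0, by omega⟩⟩
  obtain ⟨iM, hiM⟩ := exists_eq_ciSup_of_finite (f := lam)
  obtain ⟨im, him⟩ := exists_eq_ciInf_of_finite (f := lam)
  have hne : iM ≠ im := by
    rintro rfl
    exact (iInf_lt_iSup hn h1 h2).ne (him.symm.trans hiM)
  set R := ({iM, im} : Finset (Fin n))ᶜ
  have hR : (#R : ℝ) = n - 2 := by
    rw [card_compl, card_pair hne, Fintype.card_fin, Nat.cast_sub hn, Nat.cast_two]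
  have hR1 : ∑ i ∈ R, lam i = 1 - (⨆ i, lam i) - ⨅ i, lam i := by
    have := sum_compl_add_sum {iM, im} lam
    rw [sum_pair hne, hiM, him, h1] at this
    linarith
  have hR2 : ∑ i ∈ R, lam i ^ 2 = n - (⨆ i, lam i) ^ 2 - (⨅ i, lam i) ^ 2 := by
    have := sum_compl_add_sum {iM, im} (lam · ^ 2)
    rw [sum_pair hne, hiM, him, h2] at this
    linarith
  rw [← hR, ← hR1, ← hR2]
  exact sq_sum_le_card_mul_sum_sq

theorem negativityBound_le_negativityTerm_self (hn : 2 ≤ n) (h1 : ∑ i, lam i = 1)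
    (h2 : ∑ i, lam i ^ 2 = n) : negativityBound n ≤ negativityTerm lam lam := by
  rw [negativityBound_eq (by omega)]
  have := add_le_sicTop_add_sicBottom hn (mul_iSup_mul_iInf_le h1 h2)
    (sq_one_sub_iSup_sub_iInf_le hn h1 h2)
  linarith [sub_le_negativityTerm_self h1 h2]

theorem eq_sicTop_or_eq_sicBottom_of_negativityTerm_self_eq (hn : 2 ≤ n)
    (h1 : ∑ i, lam i = 1) (h2 : ∑ i, lam i ^ 2 = n)
    (heq : negativityTerm lam lam = negativityBound n) (i : Fin n) :
    lam i = sicTop n ∨ lam i = sicBottom n := by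
  obtain rfl | hn3 : n = 2 ∨ 3 ≤ n := by omega
  · -- For `n = 2` the two entries already have the sum and product of `sicTop 2`, `sicBottom 2`.
    have hsum := mul_sicTop_add_sicBottom (n := 2) (by norm_num)
    have hprod := mul_sicTop_mul_sicBottom (n := 2) (by norm_num)
    rw [Fin.sum_univ_two] at h1 h2
    push_cast at hsum hprod h2
    refine eq_or_eq_of_add_eq_of_mul_eq (M := lam 0) (m := lam 1) (by linarith) (by nlinarith) ?_
    fin_cases i <;> simp
  · set M := ⨆ i, lam i
    set m := ⨅ i, lam i
    have hprod := mul_iSup_mul_iInf_le h1 h2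
    have hcs := sq_one_sub_iSup_sub_iInf_le (by omega) h1 h2
    have hsum : M + m = sicTop n + sicBottom n :=
      le_antisymm (add_le_sicTop_add_sicBottom (by omega) hprod hcs)
        (by linarith [sub_le_negativityTerm_self h1 h2, negativityBound_eq (n := n) (by omega)])
    have hmul := mul_eq_sicTop_mul_sicBottom hn3 hprod hcs hsum
    refine eq_or_eq_of_add_eq_of_mul_eq hsum hmul ?_
    have h0 : ∑ j, (M - lam j) * (lam j - m) = 0 := by
      rw [sum_sub_mul_sub h1 h2, hsum, hmul]
      linarith [mul_sicTop_mul_sicBottom (n := n) (by omega)]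
    have := (sum_eq_zero_iff_of_nonneg fun j _ => iSup_sub_mul_sub_iInf_nonneg j).1 h0 i
      (mem_univ i)
    rcases mul_eq_zero.1 this with h | h
    · exact .inl (sub_eq_zero.1 h).symm
    · exact .inr (sub_eq_zero.1 h)

lemma exists_eq_sicTop (hn : 1 ≤ n) (h1 : ∑ i, lam i = 1)
    (hlam : ∀ i, lam i = sicTop n ∨ lam i = sicBottom n) : ∃ i, lam i = sicTop n := by
  by_contra! h
  simp only [fun i => (hlam i).resolve_left (h i), sum_const, card_univ, Fintype.card_fin,
    nsmul_eq_mul, mul_sicBottom hn] at h1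
  linarith [one_lt_sqrt_succ hn]

lemma exists_eq_sicBottom (hn : 2 ≤ n) (h1 : ∑ i, lam i = 1)
    (hlam : ∀ i, lam i = sicTop n ∨ lam i = sicBottom n) : ∃ i, lam i = sicBottom n := by
  by_contra! h
  simp only [fun i => (hlam i).resolve_right (h i), sum_const, card_univ, Fintype.card_fin,
    nsmul_eq_mul] at h1
  have hn' : (2 : ℝ) ≤ n := by exact_mod_cast hn
  have := sicTop_sub_sicBottom (n := n) (by omega)
  nlinarith [mul_sicBottom (n := n) (by omega), one_lt_sqrt_succ (n := n) (by omega)]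

lemma iSup_eq_sicTop (hn : 1 ≤ n) (h1 : ∑ i, lam i = 1)
    (hlam : ∀ i, lam i = sicTop n ∨ lam i = sicBottom n) : ⨆ i, lam i = sicTop n := by
  obtain ⟨i, hi⟩ := exists_eq_sicTop hn h1 hlam
  have : Nonempty (Fin n) := ⟨i⟩
  refine le_antisymm (ciSup_le fun j => ?_) (hi ▸ le_ciSup (Finite.bddAbove_range lam) i)
  rcases hlam j with h | h <;> rw [h]
  linarith [sicTop_sub_sicBottom hn, one_lt_sqrt_succ hn]

lemma iInf_eq_sicBottom (hn : 2 ≤ n) (h1 : ∑ i, lam i = 1)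
    (hlam : ∀ i, lam i = sicTop n ∨ lam i = sicBottom n) : ⨅ i, lam i = sicBottom n := by
  obtain ⟨i, hi⟩ := exists_eq_sicBottom hn h1 hlam
  have : Nonempty (Fin n) := ⟨i⟩
  refine le_antisymm (hi ▸ ciInf_le (Finite.bddBelow_range lam) i) (le_ciInf fun j => ?_)
  rcases hlam j with h | h <;> rw [h]
  linarith [sicTop_sub_sicBottom (n := n) (by omega), one_lt_sqrt_succ (n := n) (by omega)]

lemma sum_abs_mul_sqrt_succ (hn : 1 ≤ n) (h1 : ∑ i, lam i = 1)
    (hlam : ∀ i, lam i = sicTop n ∨ lam i = sicBottom n) :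
    (∑ i, |lam i|) * Real.sqrt (n + 1) =
      sicTop n + sicBottom n - 2 * (n * (sicTop n * sicBottom n)) := by
  rw [← sicTop_sub_sicBottom hn, sum_mul]
  simp only [fun i => abs_mul_sub_eq_of_eq_or_eq (sicBottom_neg hn).le (sicTop_pos hn).le (hlam i)]
  rw [sum_sub_distrib, ← mul_sum, h1, sum_const, card_univ, Fintype.card_fin, nsmul_eq_mul]
  ring

theorem negativityTerm_eq_negativityBound (hn : 2 ≤ n) {μ ν : Fin n → ℝ}
    (hμ1 : ∑ i, μ i = 1) (hμ : ∀ i, μ i = sicTop n ∨ μ i = sicBottom n)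
    (hν1 : ∑ i, ν i = 1) (hν : ∀ i, ν i = sicTop n ∨ ν i = sicBottom n) :
    negativityTerm μ ν = negativityBound n := by
  have hT := sum_abs_mul_sqrt_succ (by omega) hν1 hν
  rw [negativityTerm, iSup_eq_sicTop (by omega) hμ1 hμ, iInf_eq_sicBottom hn hμ1 hμ,
    negativityBound_eq (by omega)]
  linear_combination (1 / 2 : ℝ) * hT - mul_sicTop_mul_sicBottom (n := n) (by omega) +
    (1 / 2 : ℝ) * (∑ i, |ν i|) * sicTop_sub_sicBottom (n := n) (by omega)

end Spectrum

section SIC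

variable {d : ℕ}

lemma sub_sicTop_mul_sub_sicBottom_eq_zero_iff (hd : 1 ≤ d) (Q : Matrix (Fin d) (Fin d) ℂ) :
    (Q - (sicTop d : ℂ) • 1) * (Q - (sicBottom d : ℂ) • 1) = 0 ↔
      IsIdempotentElem ((Real.sqrt (d + 1) : ℂ)⁻¹ • (Q - (sicBottom d : ℂ) • 1)) := by
  rw [isIdempotentElem_inv_smul_iff ofReal_sqrt_succ_ne_zero, ← sicTop_sub_sicBottom hd,
    Complex.ofReal_sub, sub_smul, sub_sub_eq_add_sub, sub_add_cancel]

theorem eigenvalues_eq_sicTop_or_eq_sicBottom {Q P : Matrix (Fin d) (Fin d) ℂ} (hd : 1 ≤ d)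
    (hQ : Q.IsHermitian) (hP : IsIdempotentElem P)
    (hQP : Q = (Real.sqrt (d + 1) : ℂ) • P + (sicBottom d : ℂ) • 1) (i : Fin d) :
    hQ.eigenvalues i = sicTop d ∨ hQ.eigenvalues i = sicBottom d := by
  refine (hQ.sub_smul_one_mul_sub_smul_one_eq_zero_iff _ _).1
    ((sub_sicTop_mul_sub_sicBottom_eq_zero_iff hd Q).2 ?_) i
  rwa [hQP, add_sub_cancel_right, smul_smul, inv_mul_cancel₀ ofReal_sqrt_succ_ne_zero, one_smul]

theorem exists_sic_of_eigenvalues {ι : Type*} [DecidableEq ι]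
    {Q : ι → Matrix (Fin d) (Fin d) ℂ} (hd : 1 ≤ d)
    (hherm : ∀ j, (Q j).IsHermitian) (htr : ∀ j, (Q j).trace = 1)
    (hpair : ∀ j k, (Q j * Q k).trace = if j = k then (d : ℂ) else 0)
    (hspec : ∀ j i,
      (hherm j).eigenvalues i = sicTop d ∨ (hherm j).eigenvalues i = sicBottom d) :
    ∃ P : ι → Matrix (Fin d) (Fin d) ℂ,
      (∀ j, (P j).IsHermitian) ∧
      (∀ j, P j * P j = P j) ∧
      (∀ j, (P j).trace = 1) ∧
      (∀ j k, (P j * P k).trace = ((d : ℂ) * (if j = k then 1 else 0) + 1) / ((d : ℂ) + 1)) ∧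
      (∀ j, Q j = (Real.sqrt (d + 1) : ℂ) • P j + (sicBottom d : ℂ) • 1) := by
  have hs : ((Real.sqrt (d + 1) : ℝ) : ℂ) ≠ 0 := ofReal_sqrt_succ_ne_zero
  have hs2 : ((Real.sqrt (d + 1) : ℝ) : ℂ) ^ 2 = d + 1 := by
    exact_mod_cast sq_sqrt_succ (n := d)
  have hb : d * ((sicBottom d : ℝ) : ℂ) = 1 - ((Real.sqrt (d + 1) : ℝ) : ℂ) := by
    exact_mod_cast mul_sicBottom hd
  have hd0 : (d : ℂ) ≠ 0 := by exact_mod_cast (by omega : d ≠ 0)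
  set s : ℂ := ((Real.sqrt (d + 1) : ℝ) : ℂ)
  set b : ℂ := ((sicBottom d : ℝ) : ℂ)
  refine ⟨fun j => s⁻¹ • (Q j - b • 1), fun j => ?_, fun j => ?_, fun j => ?_,
    fun j k => ?_, fun j => ?_⟩
  · exact ((hherm j).sub (isHermitian_one.smul (Complex.conj_ofReal _))).smul
      (show IsSelfAdjoint s from Complex.conj_ofReal _).inv₀
  · exact (sub_sicTop_mul_sub_sicBottom_eq_zero_iff hd (Q j)).1 <|
      ((hherm j).sub_smul_one_mul_sub_smul_one_eq_zero_iff _ _).2 (hspec j)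
  · rw [trace_smul, trace_sub, trace_smul, htr, trace_one, Fintype.card_fin, smul_eq_mul,
      smul_eq_mul, mul_comm b, hb, sub_sub_cancel, inv_mul_cancel₀ hs]
  · simp only [sub_mul, mul_sub, smul_mul_assoc, mul_smul_comm, one_mul,
      mul_one, trace_smul, trace_sub, trace_one, htr, hpair, Fintype.card_fin, smul_eq_mul]
    have hb' : b * (1 + s) = -1 :=
      mul_left_cancel₀ hd0 (by linear_combination (1 + s) * hb - hs2)
    rw [← hs2]
    split_ifs <;> field_simp <;> linear_combination b * hb - hb'
  · simp only [smul_smul, mul_inv_cancel₀ hs, one_smul, sub_add_cancel]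

end SIC

end NQPR

end

open NQPR

theorem stmt_11_general (d : ℕ) (hd : 2 ≤ d)
    (Q : Fin (d ^ 2) → Matrix (Fin d) (Fin d) ℂ)
    (hherm : ∀ j, (Q j).IsHermitian)
    (htr : ∀ j, (Q j).trace = 1)
    (hpair : ∀ j k, (Q j * Q k).trace = if j = k then (d : ℂ) else 0) :
    (((d : ℝ) ^ 2 - 2 - ((d : ℝ) - 2) * Real.sqrt (d + 1)) / d ≤
      ⨆ j, ⨆ k, (1 / 2 : ℝ) *
        ((⨆ i, (hherm j).eigenvalues i) * ((∑ i, |(hherm k).eigenvalues i|) - 1)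
          - (⨅ i, (hherm j).eigenvalues i) * ((∑ i, |(hherm k).eigenvalues i|) + 1))) ∧
    ((⨆ j, ⨆ k, (1 / 2 : ℝ) *
        ((⨆ i, (hherm j).eigenvalues i) * ((∑ i, |(hherm k).eigenvalues i|) - 1)
          - (⨅ i, (hherm j).eigenvalues i) * ((∑ i, |(hherm k).eigenvalues i|) + 1))) =
        ((d : ℝ) ^ 2 - 2 - ((d : ℝ) - 2) * Real.sqrt (d + 1)) / d ↔
      ∃ P : Fin (d ^ 2) → Matrix (Fin d) (Fin d) ℂ,
        (∀ j, (P j).IsHermitian) ∧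
        (∀ j, P j * P j = P j) ∧
        (∀ j, (P j).trace = 1) ∧
        (∀ j k, (P j * P k).trace =
          ((d : ℂ) * (if j = k then 1 else 0) + 1) / ((d : ℂ) + 1)) ∧
        (∀ j, Q j = (Real.sqrt (d + 1) : ℂ) • P j +
          (((1 - Real.sqrt (d + 1)) / d : ℝ) : ℂ) • (1 : Matrix (Fin d) (Fin d) ℂ))) := by
  have hsum : ∀ j, ∑ i, (hherm j).eigenvalues i = 1 := fun j => by
    rw [(hherm j).sum_eigenvalues_eq_re_trace, htr, RCLike.one_re]
  have hsum_sq : ∀ j, ∑ i, (hherm j).eigenvalues i ^ 2 = d := fun j => by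
    rw [(hherm j).sum_sq_eigenvalues_eq_re_trace_mul_self, hpair, if_pos rfl, RCLike.natCast_re]
  have hle : ∀ j k, negativityTerm (hherm j).eigenvalues (hherm k).eigenvalues ≤
      ⨆ j, ⨆ k, negativityTerm (hherm j).eigenvalues (hherm k).eigenvalues := fun j k =>
    le_ciSup_of_le (Finite.bddAbove_range _) j <|
      le_ciSup (f := fun k => negativityTerm (hherm j).eigenvalues (hherm k).eigenvalues)
        (Finite.bddAbove_range _) k
  have hdiag : ∀ j, negativityBound d ≤
      negativityTerm (hherm j).eigenvalues (hherm j).eigenvalues := fun j =>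
    negativityBound_le_negativityTerm_self hd (hsum j) (hsum_sq j)
  have : Nonempty (Fin (d ^ 2)) := ⟨⟨0, by positivity⟩⟩
  refine ⟨(hdiag (Classical.arbitrary _)).trans (hle _ _), fun heq => ?_, ?_⟩
  · exact exists_sic_of_eigenvalues (by omega) hherm htr hpair fun j =>
      eq_sicTop_or_eq_sicBottom_of_negativityTerm_self_eq hd (hsum j) (hsum_sq j)
        (le_antisymm ((hle j j).trans_eq heq) (hdiag j))
  · rintro ⟨P, -, hP, -, -, hQP⟩
    have hspec := fun j => eigenvalues_eq_sicTop_or_eq_sicBottom (by omega) (hherm j) (hP j) (hQP j)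
    exact (iSup_congr fun j => iSup_congr fun k => negativityTerm_eq_negativityBound hd
      (hsum j) (hspec j) (hsum k) (hspec k)).trans (by simp [negativityBound])

/-- For an NQPR `Q` in dimension `d ≥ 2`, the channel negativity
`N_C(Q) = max_{j,k} (1/2)[λ_max(Q j)(‖Q k‖₁ − 1) − λ_min(Q j)(‖Q k‖₁ + 1)]` satisfies
`N_C(Q) ≥ (d² − 2 − (d−2)√(d+1))/d`, with equality iff `Q` arises from a SIC `Π` as
`Q j = √(d+1)·Π j + ((1 − √(d+1))/d)·I`. -/
theorem stmt_11 (d : ℕ) (hd : 2 ≤ d)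
    (Q : Fin (d ^ 2) → Matrix (Fin d) (Fin d) ℂ)
    (hherm : ∀ j, (Q j).IsHermitian)
    (htr : ∀ j, (Q j).trace = 1)
    (hpair : ∀ j k, (Q j * Q k).trace = if j = k then (d : ℂ) else 0)
    (hsum : ∑ j, Q j = (d : ℂ) • (1 : Matrix (Fin d) (Fin d) ℂ)) :
    (((d : ℝ) ^ 2 - 2 - ((d : ℝ) - 2) * Real.sqrt (d + 1)) / d ≤
      ⨆ j, ⨆ k, (1 / 2 : ℝ) *
        ((⨆ i, (hherm j).eigenvalues i) * ((∑ i, |(hherm k).eigenvalues i|) - 1)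
          - (⨅ i, (hherm j).eigenvalues i) * ((∑ i, |(hherm k).eigenvalues i|) + 1))) ∧
    ((⨆ j, ⨆ k, (1 / 2 : ℝ) *
        ((⨆ i, (hherm j).eigenvalues i) * ((∑ i, |(hherm k).eigenvalues i|) - 1)
          - (⨅ i, (hherm j).eigenvalues i) * ((∑ i, |(hherm k).eigenvalues i|) + 1))) =
        ((d : ℝ) ^ 2 - 2 - ((d : ℝ) - 2) * Real.sqrt (d + 1)) / d ↔
      ∃ P : Fin (d ^ 2) → Matrix (Fin d) (Fin d) ℂ,
        (∀ j, (P j).IsHermitian) ∧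
        (∀ j, P j * P j = P j) ∧
        (∀ j, (P j).trace = 1) ∧
        (∀ j k, (P j * P k).trace =
          ((d : ℂ) * (if j = k then 1 else 0) + 1) / ((d : ℂ) + 1)) ∧
        (∀ j, Q j = (Real.sqrt (d + 1) : ℂ) • P j +
          (((1 - Real.sqrt (d + 1)) / d : ℝ) : ℂ) • (1 : Matrix (Fin d) (Fin d) ℂ))) :=
  stmt_11_general d hd Q hherm htr hpair
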